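/- arXiv:2104.09042 — 4 statements merged into one kernel-verified Lean document; each statement's English description precedes it below -/
import Mathlib

section
/- Let γ, N, α, β be positive real constants and let a₁, a₂, a₃ be real constants. The function e_c(u, uₓ, u_y, p, pₓ, p_y) = S(u,p) + a₁²(uₓ² + u_y²)/(36u) + a₂²(pₓ² + p_y²)/(36p) + a₃²((uₓ+pₓ)² + (u_y+p_y)²)/(36(1−u−p)) is convex on the set {(u, uₓ, u_y, p, pₓ, p_y) ∈ ℝ⁶ : u > 0, p > 0, u + p < 1}. -/
/-!
Each term of `e_c` is a convex function composed with an affine map of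
`(u, uₓ, u_y, p, pₓ, p_y)`. The entropy terms are `t log t` up to positive rescaling and an
added linear function, and each gradient term is a nonnegative multiple of a sum of perspectives
`w² / u`, which are jointly convex on `u > 0` because
`a w²/u + b z²/v - (a w + b z)²/(a u + b v) = a b (w v - z u)² / (u v (a u + b v))`.
-/

open Real Set

theorem convexOn_div_mul_log_mul_div (c : ℝ) {d : ℝ} (hd : 0 < d) :
    ConvexOn ℝ (Ici 0) fun t => t / d * log (c * t / d) := by
  rcases eq_or_ne c 0 with rfl | hc
  · simpa using convexOn_const (0 : ℝ) (convex_Ici (0 : ℝ))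
  refine ((convexOn_mul_log.smul (inv_nonneg.2 hd.le)).add
    (((log (c / d) / d) • LinearMap.id : ℝ →ₗ[ℝ] ℝ).convexOn (convex_Ici 0))).congr ?_
  intro t _
  rcases eq_or_ne t 0 with rfl | ht
  · simp
  simp only [Pi.add_apply, smul_eq_mul, LinearMap.smul_apply, LinearMap.id_apply]
  rw [mul_div_right_comm, log_mul (div_ne_zero hc hd.ne') ht]
  field_simp
  ring

theorem convexOn_sq_div : ConvexOn ℝ {p : ℝ × ℝ | 0 < p.2} fun p => p.1 ^ 2 / p.2 := by
  have hs : Convex ℝ {p : ℝ × ℝ | 0 < p.2} :=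
    (convex_Ioi 0).linear_preimage (LinearMap.snd ℝ ℝ ℝ)
  refine ⟨hs, ?_⟩
  rintro ⟨w, u⟩ (hu : 0 < u) ⟨z, v⟩ (hv : 0 < v) a b ha hb hab
  have huv : 0 < a * u + b * v := hs (x := (w, u)) (y := (z, v)) hu hv ha hb hab
  simp only [Prod.smul_mk, Prod.mk_add_mk, smul_eq_mul]
  have gap : a * (w ^ 2 / u) + b * (z ^ 2 / v) - (a * w + b * z) ^ 2 / (a * u + b * v)
      = a * b * (w * v - z * u) ^ 2 / (u * v * (a * u + b * v)) := by
    field_simp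
    ring
  have : 0 ≤ a * b * (w * v - z * u) ^ 2 / (u * v * (a * u + b * v)) := by positivity
  linarith

theorem convexOn_mul_sq_add_sq_div {E : Type*} [AddCommGroup E] [Module ℝ E]
    (w₁ w₂ u : E →ᵃ[ℝ] ℝ) {c d : ℝ} (hc : 0 ≤ c) (hd : 0 ≤ d) :
    ConvexOn ℝ {x | 0 < u x} fun x => c * (w₁ x ^ 2 + w₂ x ^ 2) / (d * u x) := by
  refine (((convexOn_sq_div.comp_affineMap (w₁.prod u)).add
    (convexOn_sq_div.comp_affineMap (w₂.prod u))).smul (div_nonneg hc hd)).congr fun x _ => ?_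
  simp only [Pi.add_apply, Function.comp_apply, AffineMap.prod_apply, smul_eq_mul]
  rw [mul_div_mul_comm, add_div]

theorem ec_convex_general (γ N α β : ℝ) (hγ : 0 < γ) (hN : 0 < N)
    (a₁ a₂ a₃ : ℝ) :
    ConvexOn ℝ {x : Fin 6 → ℝ | 0 < x 0 ∧ 0 < x 3 ∧ x 0 + x 3 < 1}
      (fun x : Fin 6 → ℝ =>
        (x 0 / γ * Real.log (α * x 0 / γ) + x 3 / N * Real.log (β * x 3 / N)
            + (1 - x 0 - x 3) * Real.log (1 - x 0 - x 3))
          + a₁ ^ 2 * ((x 1) ^ 2 + (x 2) ^ 2) / (36 * x 0)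
          + a₂ ^ 2 * ((x 4) ^ 2 + (x 5) ^ 2) / (36 * x 3)
          + a₃ ^ 2 * ((x 1 + x 4) ^ 2 + (x 2 + x 5) ^ 2) / (36 * (1 - x 0 - x 3))) := by
  set D := {x : Fin 6 → ℝ | 0 < x 0 ∧ 0 < x 3 ∧ x 0 + x 3 < 1}
  let coord (i : Fin 6) : (Fin 6 → ℝ) →ᵃ[ℝ] ℝ := AffineMap.proj i
  let q : (Fin 6 → ℝ) →ᵃ[ℝ] ℝ := AffineMap.const ℝ _ 1 - coord 0 - coord 3
  have hD : Convex ℝ D :=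
    ((convex_Ioi 0).affine_preimage (coord 0)).inter
      (((convex_Ioi 0).affine_preimage (coord 3)).inter
        ((convex_Iio 1).affine_preimage (coord 0 + coord 3)))
  have hq : ∀ x ∈ D, 0 < q x := by
    rintro x ⟨-, -, h⟩
    change 0 < 1 - x 0 - x 3
    linarith
  have h36 : (0 : ℝ) ≤ 36 := by norm_num
  have e₁ := ((convexOn_div_mul_log_mul_div α hγ).comp_affineMap (coord 0)).subset
    (fun x hx => hx.1.le) hD
  have e₂ := ((convexOn_div_mul_log_mul_div β hN).comp_affineMap (coord 3)).subset
    (fun x hx => hx.2.1.le) hD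
  have e₃ := (convexOn_mul_log.comp_affineMap q).subset (fun x hx => (hq x hx).le) hD
  have g₁ := (convexOn_mul_sq_add_sq_div (coord 1) (coord 2) (coord 0)
    (sq_nonneg a₁) h36).subset (fun x hx => hx.1) hD
  have g₂ := (convexOn_mul_sq_add_sq_div (coord 4) (coord 5) (coord 3)
    (sq_nonneg a₂) h36).subset (fun x hx => hx.2.1) hD
  have g₃ := (convexOn_mul_sq_add_sq_div (coord 1 + coord 4) (coord 2 + coord 5) q
    (sq_nonneg a₃) h36).subset hq hD
  exact ((((e₁.add e₂).add e₃).add g₁).add g₂).add g₃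

/-- The convex part of the Flory–Huggins–deGennes energy density,
`e_c(u,uₓ,u_y,p,pₓ,p_y) = S(u,p) + a₁²(uₓ²+u_y²)/(36u) + a₂²(pₓ²+p_y²)/(36p)
  + a₃²((uₓ+pₓ)²+(u_y+p_y)²)/(36(1−u−p))`,
is convex on `{(u,uₓ,u_y,p,pₓ,p_y) ∈ ℝ⁶ : u > 0, p > 0, u + p < 1}`.
Here the coordinates are `x 0 = u, x 1 = uₓ, x 2 = u_y, x 3 = p, x 4 = pₓ, x 5 = p_y`. -/
theorem ec_convex (γ N α β : ℝ) (hγ : 0 < γ) (hN : 0 < N) (hα : 0 < α) (hβ : 0 < β)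
    (a₁ a₂ a₃ : ℝ) :
    ConvexOn ℝ {x : Fin 6 → ℝ | 0 < x 0 ∧ 0 < x 3 ∧ x 0 + x 3 < 1}
      (fun x : Fin 6 → ℝ =>
        (x 0 / γ * Real.log (α * x 0 / γ) + x 3 / N * Real.log (β * x 3 / N)
            + (1 - x 0 - x 3) * Real.log (1 - x 0 - x 3))
          + a₁ ^ 2 * ((x 1) ^ 2 + (x 2) ^ 2) / (36 * x 0)
          + a₂ ^ 2 * ((x 4) ^ 2 + (x 5) ^ 2) / (36 * x 3)
          + a₃ ^ 2 * ((x 1 + x 4) ^ 2 + (x 2 + x 5) ^ 2) / (36 * (1 - x 0 - x 3))) :=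
  ec_convex_general γ N α β hγ hN a₁ a₂ a₃
end

section
/- Let X be a real inner product space and K ⊆ X a convex set. Let E_c, E_e : X → ℝ be convex on K, having gradients ∇E_c(z), ∇E_e(z) at every z ∈ K, and set E = E_c − E_e. Suppose x, x⁺ ∈ K satisfy ⟨∇E_c(x⁺) − ∇E_e(x), x⁺ − x⟩ ≤ 0. Then E(x⁺) ≤ E(x). In particular, any one-step convex-splitting scheme, which makes this inner product equal to minus a nonnegative dissipation term, is unconditionally energy stable. -/
open scoped RealInnerProductSpace

/-!
Convexity gives the two tangent-plane inequalities
`⟪∇E_c(x⁺), x⁺ - x⟫ ≥ E_c(x⁺) - E_c(x)` (linearising `E_c` at the new point) and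
`⟪∇E_e(x), x⁺ - x⟫ ≤ E_e(x⁺) - E_e(x)` (linearising `E_e` at the old point).
Subtracting them bounds `E(x⁺) - E(x)` by `⟪∇E_c(x⁺) - ∇E_e(x), x⁺ - x⟫ ≤ 0`.
-/

open AffineMap in
theorem ConvexOn.apply_sub_le_of_hasFDerivWithinAt
    {E : Type*} [NormedAddCommGroup E] [NormedSpace ℝ E]
    {s : Set E} {f : E → ℝ} {f' : E →L[ℝ] ℝ} {a b : E}
    (hf : ConvexOn ℝ s f) (ha : a ∈ s) (hb : b ∈ s) (hf' : HasFDerivWithinAt f f' s a) :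
    f' (b - a) ≤ f b - f a := by
  let ℓ : ℝ →ᵃ[ℝ] E := lineMap a b
  have hline : ConvexOn ℝ (ℓ ⁻¹' s) (f ∘ ℓ) := hf.comp_affineMap ℓ
  have hderiv : HasDerivWithinAt (f ∘ ℓ) (f' (b - a)) (ℓ ⁻¹' s) 0 :=
    (lineMap_apply_zero a b (k := ℝ) ▸ hf').comp_hasDerivWithinAt 0 hasDerivWithinAt_lineMap
      (Set.mapsTo_preimage _ _)
  simpa [ℓ, slope_def_field] using
    hline.le_slope_of_hasDerivWithinAt (x := 0) (y := 1) (by simpa [ℓ]) (by simpa [ℓ])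
      zero_lt_one hderiv

theorem ConvexOn.inner_sub_le_of_hasFDerivAt
    {E : Type*} [NormedAddCommGroup E] [InnerProductSpace ℝ E]
    {s : Set E} {f : E → ℝ} {g a b : E}
    (hf : ConvexOn ℝ s f) (ha : a ∈ s) (hb : b ∈ s) (hg : HasFDerivAt f (innerSL ℝ g) a) :
    ⟪g, b - a⟫ ≤ f b - f a :=
  hf.apply_sub_le_of_hasFDerivWithinAt ha hb hg.hasFDerivWithinAt

theorem convex_splitting_energy_stable_general
    {X : Type*} [NormedAddCommGroup X] [InnerProductSpace ℝ X]
    (K : Set X)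
    (Ec Ee : X → ℝ) (gradEc gradEe : X → X)
    (hEc : ConvexOn ℝ K Ec) (hEe : ConvexOn ℝ K Ee)
    (hgc : ∀ z ∈ K, HasFDerivAt Ec (innerSL ℝ (gradEc z)) z)
    (hge : ∀ z ∈ K, HasFDerivAt Ee (innerSL ℝ (gradEe z)) z)
    (x xp : X) (hx : x ∈ K) (hxp : xp ∈ K)
    (hstep : ⟪gradEc xp - gradEe x, xp - x⟫ ≤ 0) :
    Ec xp - Ee xp ≤ Ec x - Ee x := by
  have hc : ⟪gradEc xp, x - xp⟫ ≤ Ec x - Ec xp :=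
    hEc.inner_sub_le_of_hasFDerivAt hxp hx (hgc xp hxp)
  have he : ⟪gradEe x, xp - x⟫ ≤ Ee xp - Ee x :=
    hEe.inner_sub_le_of_hasFDerivAt hx hxp (hge x hx)
  rw [← neg_sub xp x, inner_neg_right] at hc
  rw [inner_sub_left] at hstep
  linarith

/-- Abstract unconditional energy stability of a convex-splitting step: if `E_c` and `E_e`
are convex on a convex set `K` of a real inner product space, with gradients at every point
of `K`, `E = E_c − E_e`, and the one-step update `x⁺` from `x` satisfies
`⟨∇E_c(x⁺) − ∇E_e(x), x⁺ − x⟩ ≤ 0`, then `E(x⁺) ≤ E(x)`. -/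
theorem convex_splitting_energy_stable
    {X : Type*} [NormedAddCommGroup X] [InnerProductSpace ℝ X]
    (K : Set X) (hK : Convex ℝ K)
    (Ec Ee : X → ℝ) (gradEc gradEe : X → X)
    (hEc : ConvexOn ℝ K Ec) (hEe : ConvexOn ℝ K Ee)
    (hgc : ∀ z ∈ K, HasFDerivAt Ec (innerSL ℝ (gradEc z)) z)
    (hge : ∀ z ∈ K, HasFDerivAt Ee (innerSL ℝ (gradEe z)) z)
    (x xp : X) (hx : x ∈ K) (hxp : xp ∈ K)
    (hstep : ⟪gradEc xp - gradEe x, xp - x⟫ ≤ 0) :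
    Ec xp - Ee xp ≤ Ec x - Ee x :=
  convex_splitting_energy_stable_general K Ec Ee gradEc gradEe hEc hEe hgc hge x xp hx hxp hstep
end

section
/- Let P₁, P₂, P₃ ∈ ℝ² be affinely independent points forming a triangle e, let Δ_e > 0 be the area of e (so 2Δ_e = |det(P₂−P₁, P₃−P₁)|), and let h_e be the maximum of the pairwise distances |P₁−P₂|, |P₂−P₃|, |P₃−P₁| (the diameter of e). Let φ : ℝ² → ℝ be an affine function, φ(x) = ⟨g, x⟩ + c with g ∈ ℝ², c ∈ ℝ, such that φ(P₁), φ(P₂), φ(P₃) ≥ 0. Then ‖g‖ ≤ (√2·h_e/(2Δ_e))·(φ(P₁) + φ(P₂) + φ(P₃)). Consequently, if moreover A(φ) := (φ(P₁)+φ(P₂)+φ(P₃))/3 > 0, then ‖g‖/A(φ) ≤ 3√2·h_e/(2Δ_e). -/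
open scoped RealInnerProductSpace

/-!
Writing `D = det (P₂ - P₁, P₃ - P₁)`, Cramer's rule expresses `D • g` as `∑ φ(Pᵢ) • rot90 eᵢ`, where
`eᵢ` is the edge opposite `Pᵢ` (these are `D` times the gradients of the
barycentric coordinates). As the `φ(Pᵢ)` are nonnegative and `‖eᵢ‖ ≤ hₑ`, the triangle inequality
gives `2Δₑ ‖g‖ ≤ hₑ (φ(P₁) + φ(P₂) + φ(P₃))`, which is even sharper than the claim by a factor `√2`.
-/

def rot90 (x : EuclideanSpace ℝ (Fin 2)) : EuclideanSpace ℝ (Fin 2) := !₂[-x 1, x 0]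

def det2 (u v : EuclideanSpace ℝ (Fin 2)) : ℝ := u 0 * v 1 - u 1 * v 0

@[simp] lemma norm_rot90 (x : EuclideanSpace ℝ (Fin 2)) : ‖rot90 x‖ = ‖x‖ := by
  simp only [EuclideanSpace.norm_eq, Fin.sum_univ_two, rot90]
  simp [add_comm]

-- The constant `c` drops out because the three edges sum to zero.
lemma det2_smul_eq_sum_smul_rot90 (P₁ P₂ P₃ g : EuclideanSpace ℝ (Fin 2)) (c : ℝ)
    (φ : EuclideanSpace ℝ (Fin 2) → ℝ) (hφ : ∀ x, φ x = ⟪g, x⟫ + c) :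
    det2 (P₂ - P₁) (P₃ - P₁) • g =
      φ P₁ • rot90 (P₃ - P₂) + φ P₂ • rot90 (P₁ - P₃) + φ P₃ • rot90 (P₂ - P₁) := by
  ext i
  fin_cases i <;>
    simp [hφ, det2, rot90, PiLp.inner_apply, Fin.sum_univ_two] <;> ring

lemma abs_det2_mul_norm_le (P₁ P₂ P₃ g : EuclideanSpace ℝ (Fin 2)) (c h : ℝ)
    (φ : EuclideanSpace ℝ (Fin 2) → ℝ) (hφ : ∀ x, φ x = ⟪g, x⟫ + c)
    (h₁ : 0 ≤ φ P₁) (h₂ : 0 ≤ φ P₂) (h₃ : 0 ≤ φ P₃)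
    (h₁₂ : dist P₁ P₂ ≤ h) (h₂₃ : dist P₂ P₃ ≤ h) (h₃₁ : dist P₃ P₁ ≤ h) :
    |det2 (P₂ - P₁) (P₃ - P₁)| * ‖g‖ ≤ h * (φ P₁ + φ P₂ + φ P₃) := by
  have hterm : ∀ (a : ℝ) (x y : EuclideanSpace ℝ (Fin 2)), 0 ≤ a → dist x y ≤ h →
      ‖a • rot90 (x - y)‖ ≤ a * h := fun a x y ha hxy => by
    rw [norm_smul, norm_rot90, ← dist_eq_norm, Real.norm_of_nonneg ha]
    exact mul_le_mul_of_nonneg_left hxy ha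
  calc |det2 (P₂ - P₁) (P₃ - P₁)| * ‖g‖ = ‖det2 (P₂ - P₁) (P₃ - P₁) • g‖ := by
        rw [norm_smul, Real.norm_eq_abs]
    _ ≤ ‖φ P₁ • rot90 (P₃ - P₂)‖ + ‖φ P₂ • rot90 (P₁ - P₃)‖ + ‖φ P₃ • rot90 (P₂ - P₁)‖ := by
        rw [det2_smul_eq_sum_smul_rot90 P₁ P₂ P₃ g c φ hφ]
        exact norm_add₃_le
    _ ≤ φ P₁ * h + φ P₂ * h + φ P₃ * h := by
        gcongr
        · exact hterm _ _ _ h₁ (dist_comm P₂ P₃ ▸ h₂₃)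
        · exact hterm _ _ _ h₂ (dist_comm P₃ P₁ ▸ h₃₁)
        · exact hterm _ _ _ h₃ (dist_comm P₁ P₂ ▸ h₁₂)
    _ = h * (φ P₁ + φ P₂ + φ P₃) := by ring

theorem affine_gradient_bound_on_triangle_general
    (P₁ P₂ P₃ : EuclideanSpace ℝ (Fin 2))
    (Δₑ : ℝ) (hΔpos : 0 < Δₑ)
    (harea : 2 * Δₑ =
      |(P₂ - P₁) 0 * (P₃ - P₁) 1 - (P₂ - P₁) 1 * (P₃ - P₁) 0|)
    (hₑ : ℝ) (hdiam : hₑ = max (max (dist P₁ P₂) (dist P₂ P₃)) (dist P₃ P₁))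
    (g : EuclideanSpace ℝ (Fin 2)) (c : ℝ)
    (φ : EuclideanSpace ℝ (Fin 2) → ℝ) (hφ : ∀ x, φ x = ⟪g, x⟫ + c)
    (h1 : 0 ≤ φ P₁) (h2 : 0 ≤ φ P₂) (h3 : 0 ≤ φ P₃) :
    ‖g‖ ≤ Real.sqrt 2 * hₑ / (2 * Δₑ) * (φ P₁ + φ P₂ + φ P₃) ∧
      (0 < (φ P₁ + φ P₂ + φ P₃) / 3 →
        ‖g‖ / ((φ P₁ + φ P₂ + φ P₃) / 3) ≤ 3 * Real.sqrt 2 * hₑ / (2 * Δₑ)) := by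
  set S := φ P₁ + φ P₂ + φ P₃
  have hkey : 2 * Δₑ * ‖g‖ ≤ hₑ * S :=
    harea ▸ abs_det2_mul_norm_le P₁ P₂ P₃ g c hₑ φ hφ h1 h2 h3
      (hdiam ▸ le_max_of_le_left (le_max_left _ _))
      (hdiam ▸ le_max_of_le_left (le_max_right _ _)) (hdiam ▸ le_max_right _ _)
  have hbound : ‖g‖ ≤ Real.sqrt 2 * hₑ / (2 * Δₑ) * S := by
    have hhS : 0 ≤ hₑ * S := (by positivity : 0 ≤ 2 * Δₑ * ‖g‖).trans hkey
    rw [div_mul_eq_mul_div, le_div_iff₀ (by positivity), mul_assoc]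
    calc ‖g‖ * (2 * Δₑ) ≤ hₑ * S := by linarith
      _ ≤ Real.sqrt 2 * (hₑ * S) :=
        le_mul_of_one_le_left hhS (Real.one_le_sqrt.mpr one_le_two)
  refine ⟨hbound, fun hpos => ?_⟩
  rw [div_le_iff₀ hpos]
  calc ‖g‖ ≤ Real.sqrt 2 * hₑ / (2 * Δₑ) * S := hbound
    _ = 3 * Real.sqrt 2 * hₑ / (2 * Δₑ) * (S / 3) := by ring

/-- Gradient bound for a nonnegative affine function on a triangle: if `P₁, P₂, P₃ ∈ ℝ²`
are affinely independent, `Δₑ > 0` is the area of the triangle (`2Δₑ = |det(P₂−P₁, P₃−P₁)|`),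
`hₑ` is the diameter (maximum pairwise distance of the vertices), and `φ(x) = ⟨g, x⟩ + c`
is affine with `φ(Pᵢ) ≥ 0`, then `‖g‖ ≤ (√2·hₑ/(2Δₑ))·(φ(P₁)+φ(P₂)+φ(P₃))`;
consequently, if the average `A(φ) = (φ(P₁)+φ(P₂)+φ(P₃))/3` is positive, then
`‖g‖/A(φ) ≤ 3√2·hₑ/(2Δₑ)`. -/
theorem affine_gradient_bound_on_triangle
    (P₁ P₂ P₃ : EuclideanSpace ℝ (Fin 2))
    (hind : AffineIndependent ℝ ![P₁, P₂, P₃])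
    (Δₑ : ℝ) (hΔpos : 0 < Δₑ)
    (harea : 2 * Δₑ =
      |(P₂ - P₁) 0 * (P₃ - P₁) 1 - (P₂ - P₁) 1 * (P₃ - P₁) 0|)
    (hₑ : ℝ) (hdiam : hₑ = max (max (dist P₁ P₂) (dist P₂ P₃)) (dist P₃ P₁))
    (g : EuclideanSpace ℝ (Fin 2)) (c : ℝ)
    (φ : EuclideanSpace ℝ (Fin 2) → ℝ) (hφ : ∀ x, φ x = ⟪g, x⟫ + c)
    (h1 : 0 ≤ φ P₁) (h2 : 0 ≤ φ P₂) (h3 : 0 ≤ φ P₃) :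
    ‖g‖ ≤ Real.sqrt 2 * hₑ / (2 * Δₑ) * (φ P₁ + φ P₂ + φ P₃) ∧
      (0 < (φ P₁ + φ P₂ + φ P₃) / 3 →
        ‖g‖ / ((φ P₁ + φ P₂ + φ P₃) / 3) ≤ 3 * Real.sqrt 2 * hₑ / (2 * Δₑ)) :=
  affine_gradient_bound_on_triangle_general P₁ P₂ P₃ Δₑ hΔpos harea hₑ hdiam g c φ hφ h1 h2 h3
end

section
/- Let γ, N, α, β > 0, let χ₁₂, χ₁₃, χ₂₃ be real constants with χ₁₃ > 0, χ₂₃ > 0, and 4χ₁₃χ₂₃ − (χ₁₂ − χ₁₃ − χ₂₃)² > 0, and let a₁, a₂, a₃ be real constants. Define the energy density f(u, uₓ, u_y, p, pₓ, p_y) = S(u,p) + H(u,p) + a₁²(uₓ² + u_y²)/(36u) + a₂²(pₓ² + p_y²)/(36p) + a₃²((uₓ+pₓ)² + (u_y+p_y)²)/(36(1−u−p)) on the set D = {(u, uₓ, u_y, p, pₓ, p_y) ∈ ℝ⁶ : u > 0, p > 0, u + p < 1}. Then f admits a convex-concave decomposition on D: f = f_c − f_e, where f_c(u, uₓ, u_y,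 p, pₓ, p_y) = S(u,p) + a₁²(uₓ² + u_y²)/(36u) + a₂²(pₓ² + p_y²)/(36p) + a₃²((uₓ+pₓ)² + (u_y+p_y)²)/(36(1−u−p)) is convex on D and f_e(u, uₓ, u_y, p, pₓ, p_y) = −H(u,p) is convex on D. -/
/-!
Every term of `f_c` is convex on `D`. The entropy terms are `t ↦ t log t` (rescaled, plus a linear
term) composed with the affine maps `u`, `p`, `1 - u - p`. Each gradient term is a nonnegative
multiple of `w² / τ` with `w`, `τ` affine in `x`, and the perspective `(w, τ) ↦ w² / τ` of the square
is jointly convex on `τ > 0`. Finally `-H` is a quadratic polynomial in `(u, p)` whose quadratic part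
`χ₁₃ u² + (χ₁₃ + χ₂₃ - χ₁₂) u p + χ₂₃ p²` is positive semidefinite by the discriminant condition.
-/

open Real Set

theorem convexOn_sq_div_s13 : ConvexOn ℝ (univ ×ˢ Ioi 0) fun z : ℝ × ℝ => z.1 ^ 2 / z.2 := by
  refine ⟨convex_univ.prod (convex_Ioi 0), ?_⟩
  rintro ⟨w₁, t₁⟩ ⟨-, ht₁ : 0 < t₁⟩ ⟨w₂, t₂⟩ ⟨-, ht₂ : 0 < t₂⟩ a b ha hb hab
  have ht : 0 < a * t₁ + b * t₂ := by simpa using convex_Ioi (0 : ℝ) ht₁ ht₂ ha hb hab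
  simp only [Prod.smul_mk, Prod.mk_add_mk, smul_eq_mul]
  have gap : a * (w₁ ^ 2 / t₁) + b * (w₂ ^ 2 / t₂) - (a * w₁ + b * w₂) ^ 2 / (a * t₁ + b * t₂)
      = a * b * (w₁ * t₂ - w₂ * t₁) ^ 2 / (t₁ * t₂ * (a * t₁ + b * t₂)) := by
    field_simp
    ring
  rw [← sub_nonneg, gap]
  positivity

section Affine

variable {E : Type*} [AddCommGroup E] [Module ℝ E]

theorem convexOn_sq_div_affineMap (w τ : E →ᵃ[ℝ] ℝ) :
    ConvexOn ℝ {x | 0 < τ x} fun x => w x ^ 2 / τ x :=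
  (convexOn_sq_div_s13.comp_affineMap (w.prod τ)).subset (fun _ hx => ⟨trivial, hx⟩)
    ((convex_Ioi 0).affine_preimage τ)

theorem convexOn_mul_sum_sq_div_mul {k c : ℝ} (hk : 0 ≤ k) (hc : 0 ≤ c) (w₁ w₂ τ : E →ᵃ[ℝ] ℝ) :
    ConvexOn ℝ {x | 0 < τ x} fun x => k * (w₁ x ^ 2 + w₂ x ^ 2) / (c * τ x) := by
  refine (((convexOn_sq_div_affineMap w₁ τ).add (convexOn_sq_div_affineMap w₂ τ)).smul
    (div_nonneg hk hc)).congr fun x _ => ?_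
  simp only [Pi.add_apply, smul_eq_mul]
  ring

end Affine

theorem convexOn_div_mul_log_mul_div_s13 {γ α : ℝ} (hγ : 0 < γ) (hα : 0 < α) :
    ConvexOn ℝ (Ioi 0) fun t => t / γ * log (α * t / γ) := by
  refine (((convexOn_mul_log.subset Ioi_subset_Ici_self (convex_Ioi 0)).smul
    (inv_nonneg.2 hγ.le)).add ((LinearMap.mulLeft ℝ (log (α / γ) / γ)).convexOn (convex_Ioi 0))).congr
    fun t (ht : 0 < t) => ?_
  simp only [Pi.add_apply, smul_eq_mul, LinearMap.mulLeft_apply]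
  rw [mul_div_right_comm, log_mul (by positivity) ht.ne']
  ring

theorem quadratic_form_nonneg {a b c : ℝ} (ha : 0 < a) (hdisc : b ^ 2 ≤ 4 * a * c) (x y : ℝ) :
    0 ≤ a * x ^ 2 + b * x * y + c * y ^ 2 := by
  have key : 4 * a * (a * x ^ 2 + b * x * y + c * y ^ 2)
      = (2 * a * x + b * y) ^ 2 + (4 * a * c - b ^ 2) * y ^ 2 := by ring
  refine nonneg_of_mul_nonneg_right (key ▸ ?_) (by positivity : 0 < 4 * a)
  have := sub_nonneg.2 hdisc
  positivity

theorem convexOn_quadratic {a b c d e : ℝ} (ha : 0 < a) (hdisc : b ^ 2 ≤ 4 * a * c) :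
    ConvexOn ℝ univ fun z : ℝ × ℝ =>
      a * z.1 ^ 2 + b * z.1 * z.2 + c * z.2 ^ 2 + d * z.1 + e * z.2 := by
  refine ⟨convex_univ, ?_⟩
  rintro ⟨u₁, p₁⟩ - ⟨u₂, p₂⟩ - s t hs ht hst
  obtain rfl : t = 1 - s := eq_sub_of_add_eq' hst
  simp only [Prod.smul_mk, Prod.mk_add_mk, smul_eq_mul]
  linear_combination mul_nonneg (mul_nonneg hs ht) (quadratic_form_nonneg ha hdisc (u₁ - u₂) (p₁ - p₂))

def coordAffineMap {n : ℕ} (i : Fin n) : (Fin n → ℝ) →ᵃ[ℝ] ℝ := (LinearMap.proj i).toAffineMap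

@[simp]
theorem coordAffineMap_apply {n : ℕ} (i : Fin n) (x : Fin n → ℝ) : coordAffineMap i x = x i := rfl

def solventFraction : (Fin 6 → ℝ) →ᵃ[ℝ] ℝ :=
  AffineMap.const ℝ _ 1 - coordAffineMap 0 - coordAffineMap 3

theorem floryHugginsDeGennes_convex_concave_decomposition_general
    (γ N α β : ℝ) (hγ : 0 < γ) (hN : 0 < N) (hα : 0 < α) (hβ : 0 < β)
    (χ₁₂ χ₁₃ χ₂₃ : ℝ) (h13 : 0 < χ₁₃)
    (hdet : 0 < 4 * χ₁₃ * χ₂₃ - (χ₁₂ - χ₁₃ - χ₂₃) ^ 2)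
    (a₁ a₂ a₃ : ℝ)
    (Dset : Set (Fin 6 → ℝ))
    (hD : Dset = {x : Fin 6 → ℝ | 0 < x 0 ∧ 0 < x 3 ∧ x 0 + x 3 < 1})
    (S H f fc fe : (Fin 6 → ℝ) → ℝ)
    (hS : S = fun x =>
      x 0 / γ * Real.log (α * x 0 / γ) + x 3 / N * Real.log (β * x 3 / N)
        + (1 - x 0 - x 3) * Real.log (1 - x 0 - x 3))
    (hH : H = fun x =>
      χ₁₂ * x 0 * x 3 + χ₁₃ * x 0 * (1 - x 0 - x 3) + χ₂₃ * x 3 * (1 - x 0 - x 3))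
    (hf : f = fun x => S x + H x
        + a₁ ^ 2 * ((x 1) ^ 2 + (x 2) ^ 2) / (36 * x 0)
        + a₂ ^ 2 * ((x 4) ^ 2 + (x 5) ^ 2) / (36 * x 3)
        + a₃ ^ 2 * ((x 1 + x 4) ^ 2 + (x 2 + x 5) ^ 2) / (36 * (1 - x 0 - x 3)))
    (hfc : fc = fun x => S x
        + a₁ ^ 2 * ((x 1) ^ 2 + (x 2) ^ 2) / (36 * x 0)
        + a₂ ^ 2 * ((x 4) ^ 2 + (x 5) ^ 2) / (36 * x 3)
        + a₃ ^ 2 * ((x 1 + x 4) ^ 2 + (x 2 + x 5) ^ 2) / (36 * (1 - x 0 - x 3)))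
    (hfe : fe = fun x => -H x) :
    ConvexOn ℝ Dset fc ∧ ConvexOn ℝ Dset fe ∧ ∀ x ∈ Dset, f x = fc x - fe x := by
  subst hD hS hH hf hfc hfe
  set D := {x : Fin 6 → ℝ | 0 < x 0 ∧ 0 < x 3 ∧ x 0 + x 3 < 1}
  have hD : Convex ℝ D :=
    ((convex_Ioi 0).affine_preimage (coordAffineMap 0)).inter
      (((convex_Ioi 0).affine_preimage (coordAffineMap 3)).inter
        ((convex_Iio 1).affine_preimage (coordAffineMap 0 + coordAffineMap 3)))
  have hsolvent : ∀ x ∈ D, 0 < solventFraction x := fun x hx => by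
    show 0 < 1 - x 0 - x 3
    linarith [hx.2.2]
  have entropy := (((convexOn_div_mul_log_mul_div_s13 hγ hα).comp_affineMap (coordAffineMap 0)).subset
      (fun x hx => hx.1) hD).add
    (((convexOn_div_mul_log_mul_div_s13 hN hβ).comp_affineMap (coordAffineMap 3)).subset
      (fun x hx => hx.2.1) hD) |>.add
    ((convexOn_mul_log.comp_affineMap solventFraction).subset (fun x hx => (hsolvent x hx).le) hD)
  have grad₁ := (convexOn_mul_sum_sq_div_mul (sq_nonneg a₁) (by norm_num : (0 : ℝ) ≤ 36)
    (coordAffineMap 1) (coordAffineMap 2) (coordAffineMap 0)).subset (fun x hx => hx.1) hD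
  have grad₂ := (convexOn_mul_sum_sq_div_mul (sq_nonneg a₂) (by norm_num : (0 : ℝ) ≤ 36)
    (coordAffineMap 4) (coordAffineMap 5) (coordAffineMap 3)).subset (fun x hx => hx.2.1) hD
  have grad₃ := (convexOn_mul_sum_sq_div_mul (sq_nonneg a₃) (by norm_num : (0 : ℝ) ≤ 36)
    (coordAffineMap 1 + coordAffineMap 4) (coordAffineMap 2 + coordAffineMap 5) solventFraction).subset
    hsolvent hD
  have hdisc : (χ₁₃ + χ₂₃ - χ₁₂) ^ 2 ≤ 4 * χ₁₃ * χ₂₃ := by linear_combination hdet.le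
  have enthalpy := ((convexOn_quadratic (d := -χ₁₃) (e := -χ₂₃) h13 hdisc).comp_affineMap
    ((coordAffineMap 0).prod (coordAffineMap 3))).subset (subset_univ _) hD
  refine ⟨((entropy.add grad₁).add grad₂).add grad₃, enthalpy.congr fun x _ => ?_, fun x _ => ?_⟩
  · simp only [Function.comp_apply, AffineMap.prod_apply, coordAffineMap_apply]
    ring
  · ring

/-- Convex-concave decomposition of the Flory–Huggins–deGennes energy density:
on `D = {(u,uₓ,u_y,p,pₓ,p_y) ∈ ℝ⁶ : u > 0, p > 0, u + p < 1}` (coordinates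
`x 0 = u, x 1 = uₓ, x 2 = u_y, x 3 = p, x 4 = pₓ, x 5 = p_y`), the energy density
`f = S + H + gradient terms` splits as `f = f_c − f_e` with
`f_c = S + gradient terms` convex on `D` and `f_e = −H` convex on `D`, provided
`γ, N, α, β > 0`, `χ₁₃, χ₂₃ > 0` and `4χ₁₃χ₂₃ − (χ₁₂ − χ₁₃ − χ₂₃)² > 0`. -/
theorem floryHugginsDeGennes_convex_concave_decomposition
    (γ N α β : ℝ) (hγ : 0 < γ) (hN : 0 < N) (hα : 0 < α) (hβ : 0 < β)
    (χ₁₂ χ₁₃ χ₂₃ : ℝ) (h13 : 0 < χ₁₃) (h23 : 0 < χ₂₃)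
    (hdet : 0 < 4 * χ₁₃ * χ₂₃ - (χ₁₂ - χ₁₃ - χ₂₃) ^ 2)
    (a₁ a₂ a₃ : ℝ)
    (Dset : Set (Fin 6 → ℝ))
    (hD : Dset = {x : Fin 6 → ℝ | 0 < x 0 ∧ 0 < x 3 ∧ x 0 + x 3 < 1})
    (S H f fc fe : (Fin 6 → ℝ) → ℝ)
    (hS : S = fun x =>
      x 0 / γ * Real.log (α * x 0 / γ) + x 3 / N * Real.log (β * x 3 / N)
        + (1 - x 0 - x 3) * Real.log (1 - x 0 - x 3))
    (hH : H = fun x =>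
      χ₁₂ * x 0 * x 3 + χ₁₃ * x 0 * (1 - x 0 - x 3) + χ₂₃ * x 3 * (1 - x 0 - x 3))
    (hf : f = fun x => S x + H x
        + a₁ ^ 2 * ((x 1) ^ 2 + (x 2) ^ 2) / (36 * x 0)
        + a₂ ^ 2 * ((x 4) ^ 2 + (x 5) ^ 2) / (36 * x 3)
        + a₃ ^ 2 * ((x 1 + x 4) ^ 2 + (x 2 + x 5) ^ 2) / (36 * (1 - x 0 - x 3)))
    (hfc : fc = fun x => S x
        + a₁ ^ 2 * ((x 1) ^ 2 + (x 2) ^ 2) / (36 * x 0)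
        + a₂ ^ 2 * ((x 4) ^ 2 + (x 5) ^ 2) / (36 * x 3)
        + a₃ ^ 2 * ((x 1 + x 4) ^ 2 + (x 2 + x 5) ^ 2) / (36 * (1 - x 0 - x 3)))
    (hfe : fe = fun x => -H x) :
    ConvexOn ℝ Dset fc ∧ ConvexOn ℝ Dset fe ∧ ∀ x ∈ Dset, f x = fc x - fe x :=
  floryHugginsDeGennes_convex_concave_decomposition_general γ N α β hγ hN hα hβ χ₁₂ χ₁₃ χ₂₃ h13 hdet
    a₁ a₂ a₃ Dset hD S H f fc fe hS hH hf hfc hfe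
end
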